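/- arXiv:2507.07674 — 4 statements merged into one kernel-verified Lean document; each statement's English description precedes it below -/
import Mathlib

section
/- Let f : ℝⁿ → ℝᵐ with each component f_j differentiable at x*. If x* is a weakly efficient solution of the multi-objective problem min f(x) (i.e., there is no x with f_j(x) < f_j(x*) for all j), then for every direction d ∈ ℝⁿ, max over j of the directional derivative f_j'(x*; d) is nonnegative. -/
/-! If every `f_j'(x*; d)` were negative, each `f_j` would strictly decrease along `x* + t • d`
for all small enough `t > 0`; finitely many such eventualities hold simultaneously, so some
`x* + t • d` would improve every objective at once. -/

open Filter Topology

theorem HasDerivAt.eventually_lt_of_neg {g : ℝ → ℝ} {g' x : ℝ} (hg : HasDerivAt g g' x)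
    (hg' : g' < 0) : ∀ᶠ t in 𝓝[>] x, g t < g x := by
  have hslope : ∀ᶠ t in 𝓝[>] x, slope g x t < 0 :=
    nhdsGT_le_nhdsNE x ((hasDerivAt_iff_tendsto_slope.mp hg).eventually (gt_mem_nhds hg'))
  filter_upwards [hslope, self_mem_nhdsWithin] with t hneg hxt
  exact (slope_neg_iff_of_le (le_of_lt hxt)).mp hneg

theorem DifferentiableAt.eventually_lt_of_fderiv_neg {E : Type*} [NormedAddCommGroup E]
    [NormedSpace ℝ E] {f : E → ℝ} {x d : E} (hf : DifferentiableAt ℝ f x)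
    (hd : fderiv ℝ f x d < 0) : ∀ᶠ t in 𝓝[>] (0 : ℝ), f (x + t • d) < f x := by
  simpa using (hf.hasFDerivAt.hasLineDerivAt d).eventually_lt_of_neg hd

theorem stmt_0_general {n m : ℕ}
    (f : Fin m → EuclideanSpace ℝ (Fin n) → ℝ) (xs : EuclideanSpace ℝ (Fin n))
    (hdiff : ∀ j, DifferentiableAt ℝ (f j) xs)
    (hweak : ¬ ∃ x, ∀ j, f j x < f j xs) :
    ∀ d : EuclideanSpace ℝ (Fin n), ∃ j, 0 ≤ fderiv ℝ (f j) xs d := by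
  intro d
  by_contra! hneg
  obtain ⟨t, ht⟩ :=
    (eventually_all.2 fun j => (hdiff j).eventually_lt_of_fderiv_neg (hneg j)).exists
  exact hweak ⟨xs + t • d, ht⟩

/-- If `x*` is weakly efficient for `min (f_1,...,f_m)` and each `f_j` is differentiable
at `x*`, then for every direction `d` some directional derivative `f_j'(x*; d)` is
nonnegative (i.e. the max over `j` is nonnegative). -/
theorem stmt_0 {n m : ℕ} (hm : 0 < m)
    (f : Fin m → EuclideanSpace ℝ (Fin n) → ℝ) (xs : EuclideanSpace ℝ (Fin n))
    (hdiff : ∀ j, DifferentiableAt ℝ (f j) xs)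
    (hweak : ¬ ∃ x, ∀ j, f j x < f j xs) :
    ∀ d : EuclideanSpace ℝ (Fin n), ∃ j, 0 ≤ fderiv ℝ (f j) xs d :=
  stmt_0_general f xs hdiff hweak
end

section
/- Let g_1,...,g_m ∈ ℝⁿ and let (t*, d*) minimize t + (1/2)‖d‖² subject to g_jᵀd ≤ t for all j. If d* ≠ 0 then t* ≤ −(1/2)‖d*‖² < 0. -/
open scoped RealInnerProductSpace

/-- If `(t*, d*)` minimizes `t + ‖d‖²/2` subject to `g_jᵀ d ≤ t` for all `j`, and
`d* ≠ 0`, then `t* ≤ −‖d*‖²/2 < 0`. -/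
theorem stmt_4 {n m : ℕ} (g : Fin m → EuclideanSpace ℝ (Fin n))
    (ts : ℝ) (ds : EuclideanSpace ℝ (Fin n))
    (hfeas : ∀ j, ⟪g j, ds⟫ ≤ ts)
    (hopt : ∀ q : ℝ × EuclideanSpace ℝ (Fin n), (∀ j, ⟪g j, q.2⟫ ≤ q.1) →
      ts + (1/2) * ‖ds‖^2 ≤ q.1 + (1/2) * ‖q.2‖^2)
    (hd : ds ≠ 0) :
    ts ≤ -(1/2) * ‖ds‖^2 ∧ -(1/2) * ‖ds‖^2 < 0 := by
  have h0 : ts + (1/2) * ‖ds‖^2 ≤ (0:ℝ) + (1/2) * ‖(0 : EuclideanSpace ℝ (Fin n))‖^2 :=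
    hopt (0, 0) (fun j => by simp)
  simp only [norm_zero] at h0
  have hpos : (0:ℝ) < ‖ds‖^2 := by
    have := norm_pos_iff.mpr hd
    positivity
  constructor <;> nlinarith
end

section
/- Let g_1, ..., g_m ∈ ℝⁿ and let (t*, d*) be the optimal solution of minimizing t + (1/2)‖d‖² subject to g_jᵀd ≤ t for all j. Then d* = 0 if and only if 0 lies in the convex hull of {g_1, ..., g_m}. -/
open scoped RealInnerProductSpace

/-! If `0 ∈ conv {g_j}`, every feasible `(t, d)` has `t ≥ 0`, because the half-space
`{y | ⟪y, d⟫ ≤ t}` contains the `g_j` and hence their convex hull; so comparing with the feasible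
point `(0, 0)` forces `d* = 0`. Conversely, if `0 ∉ conv {g_j}`, a separating vector `v` with
`⟪g_j, v⟫ > 1` makes `-v` a common descent direction: moving from `(t*, 0)` to
`(t* - ε, -ε v)` stays feasible and lowers the objective by `ε - ε² ‖v‖² / 2 > 0` for small `ε`,
so `d* = 0` cannot be optimal. -/

section InnerProductSpace

variable {E : Type*} [NormedAddCommGroup E] [InnerProductSpace ℝ E]

theorem nonneg_of_zero_mem_convexHull {s : Set E} {d : E} {t : ℝ}
    (h0 : (0 : E) ∈ convexHull ℝ s) (hs : ∀ y ∈ s, ⟪y, d⟫ ≤ t) : 0 ≤ t := by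
  have hhalf : convexHull ℝ s ⊆ {y : E | ⟪y, d⟫ ≤ t} :=
    convexHull_min hs (convex_halfSpace_le ((innerₗ E).flip d).isLinear t)
  simpa using hhalf h0

theorem exists_forall_one_lt_inner_of_zero_notMem [CompleteSpace E] {C : Set E}
    (hconv : Convex ℝ C) (hclosed : IsClosed C) (h0 : (0 : E) ∉ C) :
    ∃ v : E, ∀ y ∈ C, 1 < ⟪y, v⟫ := by
  obtain ⟨f, u, hf0, hfC⟩ := geometric_hahn_banach_point_closed hconv hclosed h0
  have hu : 0 < u := by simpa using hf0
  refine ⟨u⁻¹ • (InnerProductSpace.toDual ℝ E).symm f, fun y hy => ?_⟩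
  rw [real_inner_smul_right, real_inner_comm, InnerProductSpace.toDual_symm_apply]
  exact (one_lt_inv_mul₀ hu).mpr (hfC y hy)

end InnerProductSpace

theorem exists_pos_half_mul_sq_mul_lt {a : ℝ} (ha : 0 ≤ a) : ∃ ε > 0, 1 / 2 * ε ^ 2 * a < ε := by
  refine ⟨1 / (1 + a), by positivity, ?_⟩
  field_simp
  nlinarith

/-- For the optimal solution `(t*, d*)` of the subproblem `SP₁(x)`, `d* = 0` if and
only if `0` lies in the convex hull of `{g_1, ..., g_m}`. -/
theorem stmt_5 {n m : ℕ} (g : Fin m → EuclideanSpace ℝ (Fin n))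
    (ts : ℝ) (ds : EuclideanSpace ℝ (Fin n))
    (hfeas : ∀ j, ⟪g j, ds⟫ ≤ ts)
    (hopt : ∀ q : ℝ × EuclideanSpace ℝ (Fin n), (∀ j, ⟪g j, q.2⟫ ≤ q.1) →
      ts + (1/2) * ‖ds‖^2 ≤ q.1 + (1/2) * ‖q.2‖^2) :
    ds = 0 ↔ (0 : EuclideanSpace ℝ (Fin n)) ∈ convexHull ℝ (Set.range g) := by
  constructor
  · rintro rfl
    by_contra h0
    obtain ⟨v, hv⟩ := exists_forall_one_lt_inner_of_zero_notMem (convex_convexHull ℝ _)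
      ((Set.finite_range g).isClosed_convexHull (𝕜 := ℝ)) h0
    obtain ⟨ε, hε, hsmall⟩ := exists_pos_half_mul_sq_mul_lt (sq_nonneg ‖v‖)
    have hdescent : ∀ j, ⟪g j, -(ε • v)⟫ ≤ ts - ε := fun j => by
      have hgv := hv (g j) (subset_convexHull ℝ _ (Set.mem_range_self j))
      have hts := hfeas j
      rw [inner_zero_right] at hts
      rw [inner_neg_right, real_inner_smul_right]
      nlinarith
    have hcmp := hopt (ts - ε, -(ε • v)) hdescent
    simp only [norm_neg, norm_smul, Real.norm_of_nonneg hε.le, mul_pow, norm_zero] at hcmp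
    linarith
  · intro h0
    have hts : 0 ≤ ts := nonneg_of_zero_mem_convexHull h0 (Set.forall_mem_range.2 hfeas)
    have hcmp := hopt (0, 0) (fun j => by simp)
    rw [norm_zero] at hcmp
    have hsq : ‖ds‖ ^ 2 = 0 := by nlinarith [sq_nonneg ‖ds‖]
    simpa using hsq
end

section
/- Conversely (Gordan's theorem): for g_1, ..., g_m ∈ ℝⁿ, if there is no d ∈ ℝⁿ with g_jᵀ d < 0 for all j, then there exists λ ∈ ℝᵐ with λ_j ≥ 0, Σ_j λ_j = 1, and Σ_j λ_j g_j = 0. -/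
open scoped RealInnerProductSpace

open Set

/-! If no `d` makes every `⟪g j, d⟫` negative, then `0` lies in the convex hull of the `g j`:
otherwise this compact convex set can be strictly separated from `0` by a functional, and the
Riesz representative of that functional is such a `d`. Points of the convex hull of finitely many
vectors are exactly the combinations `∑ j, λ j • g j` with `λ` in the standard simplex. -/

theorem convexHull_range_eq_image_stdSimplex {R E ι : Type*} [Field R] [LinearOrder R]
    [IsStrictOrderedRing R] [AddCommGroup E] [Module R E] [Fintype ι] (g : ι → E) :
    convexHull R (range g) = (fun w : ι → R => ∑ i, w i • g i) '' stdSimplex R ι := by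
  classical
  have hg : range g = Fintype.linearCombination R g '' range fun i => Pi.single i 1 := by
    rw [← range_comp]
    congr 1
    ext i
    simp [Fintype.linearCombination_apply_single]
  rw [hg, ← LinearMap.image_convexHull, convexHull_rangle_single_eq_stdSimplex]
  rfl

theorem exists_forall_inner_neg_of_zero_notMem {E : Type*} [NormedAddCommGroup E]
    [InnerProductSpace ℝ E] [CompleteSpace E] {t : Set E} (ht : Convex ℝ t) (htc : IsClosed t)
    (h0 : (0 : E) ∉ t) : ∃ d : E, ∀ x ∈ t, ⟪x, d⟫ < 0 := by
  obtain ⟨f, u, hft, hu⟩ := geometric_hahn_banach_closed_point ht htc h0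
  refine ⟨(InnerProductSpace.toDual ℝ E).symm f, fun x hx => ?_⟩
  rw [real_inner_comm, InnerProductSpace.toDual_symm_apply]
  simpa using (hft x hx).trans hu

theorem zero_mem_convexHull_of_not_exists_forall_inner_neg {E ι : Type*} [NormedAddCommGroup E]
    [InnerProductSpace ℝ E] [CompleteSpace E] [Finite ι] (g : ι → E)
    (h : ¬ ∃ d : E, ∀ j, ⟪g j, d⟫ < 0) : (0 : E) ∈ convexHull ℝ (range g) := by
  by_contra h0
  obtain ⟨d, hd⟩ := exists_forall_inner_neg_of_zero_notMem (convex_convexHull ℝ _)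
    ((finite_range g).isCompact_convexHull (𝕜 := ℝ)).isClosed h0
  exact h ⟨d, fun j => hd _ (subset_convexHull ℝ _ (mem_range_self j))⟩

/-- (Gordan's theorem, other direction.) If there is no `d` with `g_jᵀ d < 0` for all
`j`, then there is `λ ≥ 0` with `Σ_j λ_j = 1` and `Σ_j λ_j g_j = 0`. -/
theorem stmt_7 {n m : ℕ} (g : Fin m → EuclideanSpace ℝ (Fin n))
    (h : ¬ ∃ d : EuclideanSpace ℝ (Fin n), ∀ j, ⟪g j, d⟫ < 0) :
    ∃ lam : Fin m → ℝ, (∀ j, 0 ≤ lam j) ∧ (∑ j, lam j = 1) ∧ ∑ j, lam j • g j = 0 := by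
  have h0 := zero_mem_convexHull_of_not_exists_forall_inner_neg g h
  rw [convexHull_range_eq_image_stdSimplex] at h0
  obtain ⟨lam, ⟨hnonneg, hsum⟩, hzero⟩ := h0
  exact ⟨lam, hnonneg, hsum, hzero⟩
end
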